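/- arXiv:1910.08974 — 3 statements merged into one kernel-verified Lean document; each statement's English description precedes it below -/
import Mathlib

section
/- Let 0 ≤ π ≤ 1, and let θ, θ' ∈ [0,1] with θ ≠ θ'. Define a = (1-θ')π/(θ-θ'), b = θ'(1-π)/(θ-θ'), c = (1-θ)π/(θ-θ'), d = θ(1-π)/(θ-θ'). Then for any real numbers Rp⁺, Rp⁻, Rn⁺, Rn⁻, if Ru⁺ = θ·Rp⁺ + (1-θ)·Rn⁺, Ru⁻ = θ·Rp⁻ + (1-θ)·Rn⁻, Ru'⁺ = θ'·Rp⁺ + (1-θ')·Rn⁺, Ru'⁻ = θ'·Rp⁻ + (1-θ')·Rn⁻, then π·Rp⁺ + (1-π)·Rn⁻ = a·Ru⁺ - b·Ru⁻ - c·Ru'⁺ + d·Ru'⁻ (risk rewriting identity for UU classification). -/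
theorem risk_rewriting_identity
    (π θ θ' : ℝ) (hπ0 : 0 ≤ π) (hπ1 : π ≤ 1)
    (hθ0 : 0 ≤ θ) (hθ1 : θ ≤ 1) (hθ'0 : 0 ≤ θ') (hθ'1 : θ' ≤ 1)
    (hne : θ ≠ θ')
    (a b c d : ℝ)
    (ha : a = (1 - θ') * π / (θ - θ'))
    (hb : b = θ' * (1 - π) / (θ - θ'))
    (hc : c = (1 - θ) * π / (θ - θ'))
    (hd : d = θ * (1 - π) / (θ - θ'))
    (Rpp Rpm Rnp Rnm Rup Rum Ru'p Ru'm : ℝ)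
    (hRup : Rup = θ * Rpp + (1 - θ) * Rnp)
    (hRum : Rum = θ * Rpm + (1 - θ) * Rnm)
    (hRu'p : Ru'p = θ' * Rpp + (1 - θ') * Rnp)
    (hRu'm : Ru'm = θ' * Rpm + (1 - θ') * Rnm) :
    π * Rpp + (1 - π) * Rnm = a * Rup - b * Rum - c * Ru'p + d * Ru'm := by
  have h : θ - θ' ≠ 0 := sub_ne_zero.mpr hne
  subst ha hb hc hd hRup hRum hRu'p hRu'm
  field_simp
  ring
end

section
/- With the notation above, the bias E[R̂_cc] - R of the corrected estimator is strictly positive if and only if the event 𝔇⁻ = {ω : A(ω) - C(ω) < 0} ∪ {ω : D(ω) - B(ω) < 0} has positive probability, under the additional assumption that f₁(x) > x and f₂(x) > x for all x < 0. -/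
open MeasureTheory

theorem corrected_estimator_bias_pos_iff
    {Ω : Type*} [MeasurableSpace Ω] (μ : Measure Ω) [IsProbabilityMeasure μ]
    (f₁ f₂ : ℝ → ℝ) (K₁ K₂ : NNReal)
    (hLip₁ : LipschitzWith K₁ f₁) (hLip₂ : LipschitzWith K₂ f₂)
    (hnn₁ : ∀ x, 0 ≤ f₁ x) (hid₁ : ∀ x, 0 ≤ x → f₁ x = x)
    (hnn₂ : ∀ x, 0 ≤ f₂ x) (hid₂ : ∀ x, 0 ≤ x → f₂ x = x)
    (hstrict₁ : ∀ x < (0:ℝ), x < f₁ x) (hstrict₂ : ∀ x < (0:ℝ), x < f₂ x)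
    (A B C D : Ω → ℝ)
    (hmA : Measurable A) (hmB : Measurable B) (hmC : Measurable C) (hmD : Measurable D)
    (Ruu Rcc : Ω → ℝ)
    (hRuu : ∀ ω, Ruu ω = A ω - B ω - C ω + D ω)
    (hRcc : ∀ ω, Rcc ω = f₁ (A ω - C ω) + f₂ (D ω - B ω))
    (hIntUu : Integrable Ruu μ) (hIntCc : Integrable Rcc μ)
    (R : ℝ) (hUnbiased : ∫ ω, Ruu ω ∂μ = R) :
    (0 < (∫ ω, Rcc ω ∂μ) - R) ↔
      0 < μ ({ω | A ω - C ω < 0} ∪ {ω | D ω - B ω < 0}) := by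
  set g : Ω → ℝ := fun ω =>
    (f₁ (A ω - C ω) - (A ω - C ω)) + (f₂ (D ω - B ω) - (D ω - B ω)) with hg
  have hge : ∀ ω, g ω = Rcc ω - Ruu ω := by
    intro ω; rw [hRcc, hRuu]; simp only [hg]; ring
  have hterm₁ : ∀ x : ℝ, 0 ≤ f₁ x - x := by
    intro x
    rcases le_or_gt 0 x with h | h
    · rw [hid₁ x h]; simp
    · linarith [hstrict₁ x h]
  have hterm₂ : ∀ x : ℝ, 0 ≤ f₂ x - x := by
    intro x
    rcases le_or_gt 0 x with h | h
    · rw [hid₂ x h]; simp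
    · linarith [hstrict₂ x h]
  have hgnn : ∀ ω, 0 ≤ g ω := fun ω => add_nonneg (hterm₁ _) (hterm₂ _)
  have hgint : Integrable g μ := by
    have := hIntCc.sub hIntUu
    exact this.congr (Filter.Eventually.of_forall fun ω => (hge ω).symm)
  have hInt : ∫ ω, g ω ∂μ = (∫ ω, Rcc ω ∂μ) - R := by
    rw [← hUnbiased, ← integral_sub hIntCc hIntUu]
    exact integral_congr_ae (Filter.Eventually.of_forall hge)
  have hsupp : Function.support g = {ω | A ω - C ω < 0} ∪ {ω | D ω - B ω < 0} := by
    ext ω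
    simp only [Function.mem_support, Set.mem_union, Set.mem_setOf_eq]
    constructor
    · intro hne
      by_contra hcon
      push_neg at hcon
      obtain ⟨h1, h2⟩ := hcon
      apply hne
      simp only [hg]
      rw [hid₁ _ h1, hid₂ _ h2]; ring
    · intro h
      have hpos : 0 < g ω := by
        rcases h with h | h
        · have := hstrict₁ _ h
          have := hterm₂ (D ω - B ω)
          simp only [hg]; linarith
        · have := hstrict₂ _ h
          have := hterm₁ (A ω - C ω)
          simp only [hg]; linarith
      exact ne_of_gt hpos
  rw [← hInt, ← hsupp]
  exact integral_pos_iff_support_of_nonneg hgnn hgint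
end

section
/- Let f₁, f₂ be consistent correction functions with common Lipschitz constant L_f. Suppose 0 ≤ A ≤ aC_ℓ, 0 ≤ B ≤ bC_ℓ, 0 ≤ C ≤ cC_ℓ, 0 ≤ D ≤ dC_ℓ pointwise for nonnegative constants a,b,c,d,C_ℓ. Then pointwise, 0 ≤ (f₁(A-C)+f₂(D-B)) - ((A-C)+(D-B)) ≤ (L_f+1)(a+b+c+d)C_ℓ on the event {A-C < 0} ∪ {D-B < 0}, and the difference is 0 on the complementary event {A-C ≥ 0, D-B ≥ 0}. Consequently, if E[A-B-C+D] = R, then 0 ≤ E[f₁(A-C)+f₂(D-B)] - R ≤ (L_f+1)(a+b+c+d)·C_ℓ·P({A-C<0} ∪ {D-B<0}). -/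
open MeasureTheory

theorem corrected_estimator_bias_bound
    {Ω : Type*} [MeasurableSpace Ω] (μ : Measure Ω) [IsProbabilityMeasure μ]
    (f₁ f₂ : ℝ → ℝ) (Lf : ℝ) (hLf : 0 ≤ Lf)
    (hLip₁ : ∀ x y : ℝ, |f₁ x - f₁ y| ≤ Lf * |x - y|)
    (hLip₂ : ∀ x y : ℝ, |f₂ x - f₂ y| ≤ Lf * |x - y|)
    (hnn₁ : ∀ x, 0 ≤ f₁ x) (hid₁ : ∀ x, 0 ≤ x → f₁ x = x)
    (hnn₂ : ∀ x, 0 ≤ f₂ x) (hid₂ : ∀ x, 0 ≤ x → f₂ x = x)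
    (a b c d Cl : ℝ) (ha : 0 ≤ a) (hb : 0 ≤ b) (hc : 0 ≤ c) (hd : 0 ≤ d)
    (hCl : 0 ≤ Cl)
    (A B C D : Ω → ℝ)
    (hA : ∀ ω, 0 ≤ A ω ∧ A ω ≤ a * Cl) (hB : ∀ ω, 0 ≤ B ω ∧ B ω ≤ b * Cl)
    (hC : ∀ ω, 0 ≤ C ω ∧ C ω ≤ c * Cl) (hD : ∀ ω, 0 ≤ D ω ∧ D ω ≤ d * Cl)
    (hmA : Measurable A) (hmB : Measurable B) (hmC : Measurable C) (hmD : Measurable D)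
    (R : ℝ)
    (hUnbiased : ∫ ω, (A ω - B ω - C ω + D ω) ∂μ = R) :
    (∀ ω, 0 ≤ (f₁ (A ω - C ω) + f₂ (D ω - B ω)) - ((A ω - C ω) + (D ω - B ω))) ∧
    (∀ ω, (A ω - C ω < 0 ∨ D ω - B ω < 0) →
      (f₁ (A ω - C ω) + f₂ (D ω - B ω)) - ((A ω - C ω) + (D ω - B ω))
        ≤ (Lf + 1) * (a + b + c + d) * Cl) ∧
    (∀ ω, 0 ≤ A ω - C ω → 0 ≤ D ω - B ω →
      (f₁ (A ω - C ω) + f₂ (D ω - B ω)) - ((A ω - C ω) + (D ω - B ω)) = 0) ∧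
    (0 ≤ (∫ ω, (f₁ (A ω - C ω) + f₂ (D ω - B ω)) ∂μ) - R ∧
      (∫ ω, (f₁ (A ω - C ω) + f₂ (D ω - B ω)) ∂μ) - R
        ≤ (Lf + 1) * (a + b + c + d) * Cl *
            (μ ({ω | A ω - C ω < 0} ∪ {ω | D ω - B ω < 0})).toReal) := by
  -- basic facts about f₁, f₂
  have hf₁0 : f₁ 0 = 0 := hid₁ 0 le_rfl
  have hf₂0 : f₂ 0 = 0 := hid₂ 0 le_rfl
  have hbd₁ : ∀ x, f₁ x ≤ Lf * |x| := by
    intro x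
    have := hLip₁ x 0
    rw [hf₁0, sub_zero, sub_zero] at this
    exact (le_abs_self _).trans this
  have hbd₂ : ∀ x, f₂ x ≤ Lf * |x| := by
    intro x
    have := hLip₂ x 0
    rw [hf₂0, sub_zero, sub_zero] at this
    exact (le_abs_self _).trans this
  have hge₁ : ∀ x, x ≤ f₁ x := by
    intro x
    rcases le_or_gt 0 x with h | h
    · exact (hid₁ x h).ge
    · exact h.le.trans (hnn₁ x)
  have hge₂ : ∀ x, x ≤ f₂ x := by
    intro x
    rcases le_or_gt 0 x with h | h
    · exact (hid₂ x h).ge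
    · exact h.le.trans (hnn₂ x)
  set g : Ω → ℝ := fun ω => (f₁ (A ω - C ω) + f₂ (D ω - B ω)) - ((A ω - C ω) + (D ω - B ω))
    with hg
  have habsAC : ∀ ω, |A ω - C ω| ≤ (a + c) * Cl := by
    intro ω
    rw [abs_le]
    constructor
    · nlinarith [(hA ω).1, (hA ω).2, (hC ω).1, (hC ω).2]
    · nlinarith [(hA ω).1, (hA ω).2, (hC ω).1, (hC ω).2]
  have habsDB : ∀ ω, |D ω - B ω| ≤ (b + d) * Cl := by
    intro ω
    rw [abs_le]
    constructor
    · nlinarith [(hD ω).1, (hD ω).2, (hB ω).1, (hB ω).2]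
    · nlinarith [(hD ω).1, (hD ω).2, (hB ω).1, (hB ω).2]
  have h1 : ∀ ω, 0 ≤ g ω := by
    intro ω
    have := hge₁ (A ω - C ω)
    have := hge₂ (D ω - B ω)
    simp only [hg]
    linarith
  have h2 : ∀ ω, g ω ≤ (Lf + 1) * (a + b + c + d) * Cl := by
    intro ω
    have e1 := hbd₁ (A ω - C ω)
    have e2 := hbd₂ (D ω - B ω)
    have e3 := habsAC ω
    have e4 := habsDB ω
    have e5 := abs_nonneg (A ω - C ω)
    have e6 := abs_nonneg (D ω - B ω)
    have e7 := neg_abs_le (A ω - C ω)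
    have e8 := neg_abs_le (D ω - B ω)
    simp only [hg]
    nlinarith
  have h3 : ∀ ω, 0 ≤ A ω - C ω → 0 ≤ D ω - B ω → g ω = 0 := by
    intro ω hx hy
    simp only [hg, hid₁ _ hx, hid₂ _ hy]
    ring
  refine ⟨h1, fun ω _ => h2 ω, h3, ?_⟩
  -- measurability / continuity of f₁ f₂
  have hcont₁ : Continuous f₁ := by
    have : LipschitzWith (Real.toNNReal Lf) f₁ := by
      apply LipschitzWith.of_dist_le_mul
      intro x y
      rw [Real.dist_eq, Real.dist_eq, Real.coe_toNNReal _ hLf]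
      exact hLip₁ x y
    exact this.continuous
  have hcont₂ : Continuous f₂ := by
    have : LipschitzWith (Real.toNNReal Lf) f₂ := by
      apply LipschitzWith.of_dist_le_mul
      intro x y
      rw [Real.dist_eq, Real.dist_eq, Real.coe_toNNReal _ hLf]
      exact hLip₂ x y
    exact this.continuous
  have hmF : Measurable (fun ω => f₁ (A ω - C ω) + f₂ (D ω - B ω)) :=
    ((hcont₁.measurable.comp (hmA.sub hmC)).add
      (hcont₂.measurable.comp (hmD.sub hmB)))
  have hintF : Integrable (fun ω => f₁ (A ω - C ω) + f₂ (D ω - B ω)) μ := by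
    refine (integrable_const (Lf * ((a + c) * Cl) + Lf * ((b + d) * Cl))).mono'
      hmF.aestronglyMeasurable ?_
    filter_upwards with ω
    have e1 := hbd₁ (A ω - C ω)
    have e2 := hbd₂ (D ω - B ω)
    have e3 := habsAC ω
    have e4 := habsDB ω
    have n1 := hnn₁ (A ω - C ω)
    have n2 := hnn₂ (D ω - B ω)
    rw [Real.norm_eq_abs, abs_of_nonneg (by linarith)]
    nlinarith [abs_nonneg (A ω - C ω), abs_nonneg (D ω - B ω)]
  have hintLin : Integrable (fun ω => (A ω - C ω) + (D ω - B ω)) μ := by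
    refine (integrable_const ((a + c) * Cl + (b + d) * Cl)).mono'
      ((hmA.sub hmC).add (hmD.sub hmB)).aestronglyMeasurable ?_
    filter_upwards with ω
    have e3 := habsAC ω
    have e4 := habsDB ω
    calc ‖(A ω - C ω) + (D ω - B ω)‖ ≤ |A ω - C ω| + |D ω - B ω| := abs_add_le _ _
      _ ≤ (a + c) * Cl + (b + d) * Cl := by linarith
  have hintg : Integrable g μ := hintF.sub hintLin
  have hR : ∫ ω, ((A ω - C ω) + (D ω - B ω)) ∂μ = R := by
    rw [← hUnbiased]
    congr 1
    funext ω
    ring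
  have hsplit : (∫ ω, (f₁ (A ω - C ω) + f₂ (D ω - B ω)) ∂μ) - R = ∫ ω, g ω ∂μ := by
    rw [← hR, ← integral_sub hintF hintLin]
  rw [hsplit]
  constructor
  · exact integral_nonneg h1
  · set S : Set Ω := {ω | A ω - C ω < 0} ∪ {ω | D ω - B ω < 0} with hS
    have hSm : MeasurableSet S :=
      ((measurableSet_lt (hmA.sub hmC) measurable_const)).union
        ((measurableSet_lt (hmD.sub hmB) measurable_const))
    set M := (Lf + 1) * (a + b + c + d) * Cl with hM
    have hM0 : 0 ≤ M := by positivity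
    have hle : ∀ ω, g ω ≤ S.indicator (fun _ => M) ω := by
      intro ω
      by_cases hω : ω ∈ S
      · rw [Set.indicator_of_mem hω]
        exact h2 ω
      · rw [Set.indicator_of_notMem hω]
        simp only [hS, Set.mem_union, Set.mem_setOf_eq, not_or, not_lt] at hω
        exact (h3 ω hω.1 hω.2).le
    have hind : Integrable (S.indicator (fun _ => M)) μ :=
      (integrable_const M).indicator hSm
    calc ∫ ω, g ω ∂μ ≤ ∫ ω, S.indicator (fun _ => M) ω ∂μ :=
          integral_mono hintg hind hle
      _ = M * (μ S).toReal := by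
          rw [integral_indicator hSm, integral_const]
          simp [Measure.restrict_apply_univ, mul_comm, measureReal_def]
end
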